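/- arXiv:2603.14758 — 2 statements merged into one kernel-verified Lean document; each statement's English description precedes it below -/
import Mathlib

section
/- Suppose the leisure choices of a married couple satisfy the first-order conditions (1-λ)·α_l·l_m^(-γ_l) = η·w_m and λ·α_l·l_f^(-γ_l) = η·w_f with η > 0, α_l > 0, γ_l > 0, l_m, l_f > 0, w_m, w_f > 0, where λ = 1/(1 + exp(ρ₀ + ρ₁(log w_m - log w_f) + ρ₂·𝟙{N₀>0})). Then log l_m - log l_f = ρ₀/γ_l + ((ρ₁-1)/γ_l)·(log w_m - log w_f) + (ρ₂/γ_l)·𝟙{N₀>0}. -/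
/-!
Dividing the two first-order conditions eliminates `η` and `α_l`. The logistic weight has odds
`(1 - λ) / λ = exp X`, with `X` its index, so `w_m / w_f = exp X * (l_m / l_f) ^ (-γ_l)`, and taking
logarithms makes the log leisure gap linear in `X` and the log wage gap.
-/

open Real

lemma one_sub_one_div_one_add_exp_div (x : ℝ) :
    (1 - 1 / (1 + exp x)) / (1 / (1 + exp x)) = exp x := by
  have : 1 + exp x ≠ 0 := by positivity
  field_simp
  ring

lemma div_eq_of_first_order_conditions {μ ν α η A B u v : ℝ} (hν : 0 < ν) (hα : 0 < α)
    (hB : 0 < B) (hu : μ * α * A = η * u) (hv : ν * α * B = η * v) :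
    u / v = μ / ν * (A / B) := by
  have hηv : η * v ≠ 0 := by rw [← hv]; positivity
  have hη : η ≠ 0 := left_ne_zero_of_mul hηv
  have hv0 : v ≠ 0 := right_ne_zero_of_mul hηv
  have hcross : u * ν * B = μ * A * v :=
    mul_left_cancel₀ (mul_ne_zero hη hα.ne') <| by
      linear_combination (μ * α * A) * hv - (ν * α * B) * hu
  field_simp
  linarith

theorem stmt_1_general (ρ0 ρ1 ρ2 γl αl η wm wf lm lf lam : ℝ) (N0 : ℕ)
    (hα : 0 < αl) (hγ : 0 < γl)
    (hlm : 0 < lm) (hlf : 0 < lf)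
    (hlam : lam = 1 / (1 + Real.exp (ρ0 + ρ1 * (Real.log wm - Real.log wf)
      + ρ2 * (if 0 < N0 then 1 else 0))))
    (foc_m : (1 - lam) * αl * lm ^ (-γl) = η * wm)
    (foc_f : lam * αl * lf ^ (-γl) = η * wf) :
    Real.log lm - Real.log lf =
      ρ0 / γl + ((ρ1 - 1) / γl) * (Real.log wm - Real.log wf)
        + (ρ2 / γl) * (if 0 < N0 then 1 else 0) := by
  set X := ρ0 + ρ1 * (log wm - log wf) + ρ2 * (if 0 < N0 then 1 else 0) with hX
  have hlam_pos : 0 < lam := by rw [hlam]; positivity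
  have hratio : wm / wf = exp X * (lm / lf) ^ (-γl) := by
    rw [← one_sub_one_div_one_add_exp_div X, ← hlam, div_rpow hlm.le hlf.le]
    exact div_eq_of_first_order_conditions hlam_pos hα (by positivity) foc_m foc_f
  obtain ⟨hwm, hwf⟩ : wm ≠ 0 ∧ wf ≠ 0 := div_ne_zero_iff.mp <| by rw [hratio]; positivity
  have hlog : log wm - log wf = X - γl * (log lm - log lf) := by
    rw [← log_div hwm hwf, hratio, log_mul (exp_pos X).ne' (by positivity), log_exp,
      log_rpow (div_pos hlm hlf), log_div hlm.ne' hlf.ne']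
    ring
  have hgap : (log lm - log lf) * γl = X - (log wm - log wf) := by linarith
  rw [eq_div_of_mul_eq hγ.ne' hgap, hX]
  ring

/-- Intra-household leisure gap from the couple's first-order conditions with
logistic bargaining weight. -/
theorem stmt_1 (ρ0 ρ1 ρ2 γl αl η wm wf lm lf lam : ℝ) (N0 : ℕ)
    (hη : 0 < η) (hα : 0 < αl) (hγ : 0 < γl)
    (hlm : 0 < lm) (hlf : 0 < lf) (hwm : 0 < wm) (hwf : 0 < wf)
    (hlam : lam = 1 / (1 + Real.exp (ρ0 + ρ1 * (Real.log wm - Real.log wf)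
      + ρ2 * (if 0 < N0 then 1 else 0))))
    (foc_m : (1 - lam) * αl * lm ^ (-γl) = η * wm)
    (foc_f : lam * αl * lf ^ (-γl) = η * wf) :
    Real.log lm - Real.log lf =
      ρ0 / γl + ((ρ1 - 1) / γl) * (Real.log wm - Real.log wf)
        + (ρ2 / γl) * (if 0 < N0 then 1 else 0) :=
  stmt_1_general ρ0 ρ1 ρ2 γl αl η wm wf lm lf lam N0 hα hγ hlm hlf hlam foc_m foc_f
end

section
/- Under the first-order conditions (1-λ)·α_l·l_m^(-γ_l) = η·w_m and λ·α_l·l_f^(-γ_l) = η·w_f with λ the logistic bargaining weight λ = 1/(1 + exp(ρ₀ + ρ₁·x + ρ₂·𝟙{N₀>0})) where x = log w_m - log w_f, the leisure gap log l_m - log l_f is a strictly increasing function of x if and only if ρ₁ > 1. -/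
/-!
Taking logarithms of the two first-order conditions and subtracting them eliminates `η` and
`α_l`: `γ_l (log l_m - log l_f) = log ((1 - λ) / λ) - x`. Since `λ = 1 / (1 + exp t)`, this
log-odds ratio is the index `t = ρ₀ + ρ₁ x + ρ₂ 𝟙{N₀ > 0}`, so the leisure gap is affine in `x`
with slope `(ρ₁ - 1) / γ_l`.
-/

open Real

theorem log_eq_of_mul_rpow_neg_eq {a α γ l η w : ℝ} (ha : 0 < a) (hα : 0 < α) (hl : 0 < l)
    (hη : 0 < η) (hw : 0 < w) (h : a * α * l ^ (-γ) = η * w) :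
    log a + log α - γ * log l = log η + log w := by
  have := congrArg log h
  rwa [log_mul (by positivity) (rpow_pos_of_pos hl _).ne', log_mul ha.ne' hα.ne',
    log_rpow hl, log_mul hη.ne' hw.ne', neg_mul, ← sub_eq_add_neg] at this

theorem log_one_sub_sub_log_of_eq_inv_one_add_exp {lam t : ℝ} (h : lam = 1 / (1 + exp t)) :
    0 < lam ∧ 0 < 1 - lam ∧ log (1 - lam) - log lam = t := by
  have hlam : 0 < lam := h ▸ by positivity
  have hcompl : 1 - lam = exp t * lam := by
    rw [h]; field_simp; ring
  refine ⟨hlam, hcompl ▸ by positivity, ?_⟩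
  rw [hcompl, log_mul (exp_pos t).ne' hlam.ne', log_exp, add_sub_cancel_right]

theorem strictMono_mul_add_iff {a b : ℝ} : StrictMono (fun x => a * x + b) ↔ 0 < a := by
  refine ⟨fun h => ?_, fun ha => (strictMono_mul_left_of_pos ha).add_const b⟩
  simpa using h zero_lt_one

/-- The intra-household leisure gap is a strictly increasing function of the
log wage gap `x` if and only if the bargaining curvature `ρ₁` exceeds 1. -/
theorem stmt_2 (ρ0 ρ1 ρ2 γl αl : ℝ) (N0 : ℕ) (hγ : 0 < γl) (hα : 0 < αl)
    (wm wf lm lf η lam : ℝ → ℝ)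
    (hwm : ∀ x, 0 < wm x) (hwf : ∀ x, 0 < wf x)
    (hx : ∀ x, Real.log (wm x) - Real.log (wf x) = x)
    (hlm : ∀ x, 0 < lm x) (hlf : ∀ x, 0 < lf x) (hη : ∀ x, 0 < η x)
    (hlam : ∀ x, lam x = 1 / (1 + Real.exp (ρ0 + ρ1 * x
      + ρ2 * (if 0 < N0 then 1 else 0))))
    (foc_m : ∀ x, (1 - lam x) * αl * (lm x) ^ (-γl) = η x * wm x)
    (foc_f : ∀ x, lam x * αl * (lf x) ^ (-γl) = η x * wf x) :
    StrictMono (fun x => Real.log (lm x) - Real.log (lf x)) ↔ 1 < ρ1 := by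
  set c : ℝ := ρ0 + ρ2 * (if 0 < N0 then 1 else 0)
  have gap : ∀ x, log (lm x) - log (lf x) = (ρ1 - 1) / γl * x + c / γl := by
    intro x
    obtain ⟨hlam_pos, hcompl_pos, hlogit⟩ := log_one_sub_sub_log_of_eq_inv_one_add_exp (hlam x)
    have hm := log_eq_of_mul_rpow_neg_eq hcompl_pos hα (hlm x) (hη x) (hwm x) (foc_m x)
    have hf := log_eq_of_mul_rpow_neg_eq hlam_pos hα (hlf x) (hη x) (hwf x) (foc_f x)
    field_simp
    linarith [hx x]
  simp only [gap, strictMono_mul_add_iff, div_pos_iff_of_pos_right hγ, sub_pos]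
end
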